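/- Let X, Y, Z be random variables taking values in finite nonempty types on a common probability space such that Y and Z are conditionally independent given X (the Markov chain Y — X — Z), and let β ≥ 0. For each value z of Z let q(·|z) be a probability mass function on the value type of Y with q(y|z) > 0 whenever P(Z = z, Y = y) > 0, and let r be a probability mass function on the value type of Z with r(z) > 0 whenever P(Z = z) > 0. Then I(Z; Y) − β · I(X; Z) ≥ E_{(x,y)∼P_{X,Y}}[ Σ_z P(Z = z | X = x) · ( log q(y|z) − β · log( P(Z = z | X = x) / r(z) ) ) ]. -/

import Mathlib

/-!
Under the Markov chain `Y — X — Z`, `p(x,y) · p(z|x)` is the joint law of `(Y, Z, X)`, so the VIB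
objective is `E[log q(Y|Z)] - β · E[log (p(Z|X) / r(Z))]`. Gibbs' inequality bounds both
expectations: `E[log q(Y|Z)] = I(Z;Y) - H(Y) - KL(p_{ZY} ‖ p_Z q) ≤ I(Z;Y)` and
`E[log (p(Z|X) / r(Z))] = I(X;Z) + KL(p_Z ‖ r) ≥ I(X;Z)`.
-/

open Classical Finset Real

/-- `μ` is a probability mass function on the finite type `Ω`. -/
def IsPMF {Ω : Type*} [Fintype Ω] (μ : Ω → ℝ) : Prop :=
  (∀ ω, 0 ≤ μ ω) ∧ ∑ ω, μ ω = 1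

open Classical in
/-- Probability that the random variable `X` takes the value `a`, under `μ`. -/
noncomputable def pr {Ω α : Type*} [Fintype Ω] (μ : Ω → ℝ) (X : Ω → α) (a : α) : ℝ :=
  ∑ ω, if X ω = a then μ ω else 0

/-- Shannon entropy `H(X)` (natural logarithm). -/
noncomputable def ent {Ω α : Type*} [Fintype Ω] [Fintype α] (μ : Ω → ℝ) (X : Ω → α) : ℝ :=
  -∑ a, pr μ X a * Real.log (pr μ X a)

/-- Conditional entropy `H(X | Y) := H(X, Y) - H(Y)`. -/
noncomputable def condEnt {Ω α β : Type*} [Fintype Ω] [Fintype α] [Fintype β]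
    (μ : Ω → ℝ) (X : Ω → α) (Y : Ω → β) : ℝ :=
  ent μ (fun ω => (X ω, Y ω)) - ent μ Y

/-- Mutual information `I(X; Y) := H(X) + H(Y) - H(X, Y)`. -/
noncomputable def mi {Ω α β : Type*} [Fintype Ω] [Fintype α] [Fintype β]
    (μ : Ω → ℝ) (X : Ω → α) (Y : Ω → β) : ℝ :=
  ent μ X + ent μ Y - ent μ (fun ω => (X ω, Y ω))

/-- Conditional mutual information
`I(X; Y | Z) := H(X, Z) + H(Y, Z) - H(X, Y, Z) - H(Z)`. -/
noncomputable def condMI {Ω α β γ : Type*} [Fintype Ω] [Fintype α] [Fintype β] [Fintype γ]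
    (μ : Ω → ℝ) (X : Ω → α) (Y : Ω → β) (Z : Ω → γ) : ℝ :=
  ent μ (fun ω => (X ω, Z ω)) + ent μ (fun ω => (Y ω, Z ω))
    - ent μ (fun ω => ((X ω, Y ω), Z ω)) - ent μ Z

/-- Independence of the random variables `X` and `Y` under `μ`. -/
def IndepRV {Ω α β : Type*} [Fintype Ω] (μ : Ω → ℝ) (X : Ω → α) (Y : Ω → β) : Prop :=
  ∀ a b, pr μ (fun ω => (X ω, Y ω)) (a, b) = pr μ X a * pr μ Y b

/-- Kullback–Leibler divergence between pmfs on a finite type (natural logarithm). -/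
noncomputable def KL {α : Type*} [Fintype α] (p q : α → ℝ) : ℝ :=
  ∑ x, p x * Real.log (p x / q x)

/-- Jensen–Shannon divergence between pmfs on a finite type. -/
noncomputable def JSD {α : Type*} [Fintype α] (p q : α → ℝ) : ℝ :=
  (1 / 2) * KL p (fun x => (p x + q x) / 2) + (1 / 2) * KL q (fun x => (p x + q x) / 2)

lemma sub_le_mul_log_div {p q : ℝ} (hp : 0 ≤ p) (hq : 0 ≤ q) (hpq : 0 < p → 0 < q) :
    p - q ≤ p * log (p / q) := by
  rcases hp.eq_or_lt with rfl | hp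
  · simpa using hq
  · have hlog := Real.one_sub_inv_le_log_of_pos (div_pos hp (hpq hp))
    rw [inv_div] at hlog
    calc p - q = p * (1 - q / p) := by field_simp
      _ ≤ p * log (p / q) := mul_le_mul_of_nonneg_left hlog hp.le

lemma KL_nonneg {α : Type*} [Fintype α] {p q : α → ℝ} (hp : IsPMF p) (hq : IsPMF q)
    (hpq : ∀ a, 0 < p a → 0 < q a) : 0 ≤ KL p q := by
  have h := Finset.sum_le_sum fun a (_ : a ∈ univ) =>
    sub_le_mul_log_div (hp.1 a) (hq.1 a) (hpq a)
  rwa [Finset.sum_sub_distrib, hp.2, hq.2, sub_self] at h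

section Probability

variable {Ω α β γ : Type*} [Fintype Ω] {μ : Ω → ℝ}

lemma pr_nonneg (hμ : ∀ ω, 0 ≤ μ ω) (f : Ω → α) (a : α) : 0 ≤ pr μ f a :=
  Finset.sum_nonneg fun ω _ => by split_ifs <;> simp [hμ ω]

lemma pr_le_pr_of_imp (hμ : ∀ ω, 0 ≤ μ ω) {f : Ω → α} {g : Ω → β} {a : α} {b : β}
    (h : ∀ ω, f ω = a → g ω = b) : pr μ f a ≤ pr μ g b :=
  Finset.sum_le_sum fun ω _ => by
    by_cases hf : f ω = a
    · simp [hf, h ω hf]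
    · simp only [hf, if_false]; split_ifs <;> simp [hμ ω]

lemma pr_pos_of_pos (hμ : ∀ ω, 0 ≤ μ ω) {ω : Ω} (hω : 0 < μ ω) (f : Ω → α) :
    0 < pr μ f (f ω) := by
  refine hω.trans_le ?_
  simpa [pr] using Finset.single_le_sum (f := fun ω' => if f ω' = f ω then μ ω' else 0)
    (fun ω' _ => by split_ifs <;> simp [hμ ω']) (Finset.mem_univ ω)

lemma pr_pair_comm (f : Ω → α) (g : Ω → β) (a : α) (b : β) :
    pr μ (fun ω => (f ω, g ω)) (a, b) = pr μ (fun ω => (g ω, f ω)) (b, a) := by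
  simp only [pr, Prod.mk.injEq, and_comm]

lemma pr_pair_mul_div_eq_pr_triple (hμ : ∀ ω, 0 ≤ μ ω) {f : Ω → α} {g : Ω → β} {h : Ω → γ}
    {a : α} {b : β} {c : γ}
    (hcond : 0 < pr μ f a →
      pr μ (fun ω => (g ω, h ω, f ω)) (b, c, a) / pr μ f a
        = pr μ (fun ω => (g ω, f ω)) (b, a) / pr μ f a
          * (pr μ (fun ω => (h ω, f ω)) (c, a) / pr μ f a)) :
    pr μ (fun ω => (f ω, g ω)) (a, b) * (pr μ (fun ω => (h ω, f ω)) (c, a) / pr μ f a)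
      = pr μ (fun ω => (g ω, h ω, f ω)) (b, c, a) := by
  rcases (pr_nonneg hμ f a).eq_or_lt with h0 | hpos
  · have hle := pr_le_pr_of_imp hμ (f := fun ω => (g ω, h ω, f ω)) (a := (b, c, a)) (b := a)
      fun ω hω => congrArg (·.2.2) hω
    rw [← h0, div_zero, mul_zero]
    exact (le_antisymm (hle.trans h0.ge) (pr_nonneg hμ _ _)).symm
  · rw [div_eq_iff hpos.ne'] at hcond
    rw [hcond hpos, pr_pair_comm f g]
    field_simp

lemma sum_pr_mul [Fintype α] (f : Ω → α) (g : α → ℝ) :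
    ∑ a, pr μ f a * g a = ∑ ω, μ ω * g (f ω) := by
  simp only [pr, Finset.sum_mul, ite_mul, zero_mul]
  rw [Finset.sum_comm]
  simp

lemma isPMF_pr [Fintype α] (hμ : IsPMF μ) (f : Ω → α) : IsPMF (pr μ f) :=
  ⟨pr_nonneg hμ.1 f, by simpa [hμ.2] using sum_pr_mul (μ := μ) f fun _ => 1⟩

lemma sum_mul_congr_of_pos (hμ : ∀ ω, 0 ≤ μ ω) {F G : Ω → ℝ}
    (h : ∀ ω, 0 < μ ω → F ω = G ω) : ∑ ω, μ ω * F ω = ∑ ω, μ ω * G ω :=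
  Finset.sum_congr rfl fun ω _ => by
    rcases (hμ ω).eq_or_lt with h0 | hpos
    · simp [← h0]
    · rw [h ω hpos]

lemma ent_eq_sum [Fintype α] (f : Ω → α) :
    ent μ f = -∑ ω, μ ω * log (pr μ f (f ω)) := by
  rw [ent, sum_pr_mul f fun a => log (pr μ f a)]

lemma ent_nonneg [Fintype α] (hμ : IsPMF μ) (f : Ω → α) : 0 ≤ ent μ f := by
  have hp := isPMF_pr hμ f
  have hle : ∀ a, pr μ f a ≤ 1 := fun a =>
    hp.2 ▸ Finset.single_le_sum (fun b _ => hp.1 b) (Finset.mem_univ a)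
  simpa [ent, Finset.sum_neg_distrib, negMulLog, neg_mul] using
    Finset.sum_nonneg fun a (_ : a ∈ univ) => negMulLog_nonneg (hp.1 a) (hle a)

lemma mi_eq_sum [Fintype α] [Fintype β] (f : Ω → α) (g : Ω → β) :
    mi μ f g = ∑ ω, μ ω * (log (pr μ (fun ω => (f ω, g ω)) (f ω, g ω))
      - log (pr μ f (f ω)) - log (pr μ g (g ω))) := by
  simp only [mi, ent_eq_sum, mul_sub, Finset.sum_sub_distrib]
  ring

lemma KL_pr_eq_sum [Fintype α] (f : Ω → α) (q : α → ℝ) :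
    KL (pr μ f) q = ∑ ω, μ ω * log (pr μ f (f ω) / q (f ω)) :=
  sum_pr_mul f fun a => log (pr μ f a / q a)

lemma sum_mul_log_le_mi [Fintype β] [Fintype γ] (hμ : IsPMF μ) (g : Ω → γ) (f : Ω → β)
    {q : γ → β → ℝ} (hq : ∀ c, IsPMF (q c))
    (hqpos : ∀ c b, 0 < pr μ (fun ω => (g ω, f ω)) (c, b) → 0 < q c b) :
    ∑ ω, μ ω * log (q (g ω) (f ω)) ≤ mi μ g f := by
  have hdecoded : IsPMF fun w : γ × β => pr μ g w.1 * q w.1 w.2 :=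
    ⟨fun w => mul_nonneg (pr_nonneg hμ.1 g _) ((hq w.1).1 _), by
      simp [Fintype.sum_prod_type, ← Finset.mul_sum, (hq _).2, (isPMF_pr hμ g).2]⟩
  have hKL := KL_nonneg (isPMF_pr hμ fun ω => (g ω, f ω)) hdecoded fun w hw =>
    mul_pos (hw.trans_le (pr_le_pr_of_imp hμ.1 fun ω h => congrArg Prod.fst h))
      (hqpos w.1 w.2 hw)
  calc ∑ ω, μ ω * log (q (g ω) (f ω))
      ≤ ∑ ω, μ ω * log (q (g ω) (f ω)) + KL (pr μ fun ω => (g ω, f ω))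
          (fun w => pr μ g w.1 * q w.1 w.2) + ent μ f := by
        linarith [ent_nonneg hμ f]
    _ = mi μ g f := by
        simp only [KL_pr_eq_sum, ent_eq_sum, mi_eq_sum, ← sub_eq_add_neg,
          ← Finset.sum_add_distrib, ← Finset.sum_sub_distrib, ← mul_add, ← mul_sub]
        refine sum_mul_congr_of_pos hμ.1 fun ω hω => ?_
        have hgf := pr_pos_of_pos hμ.1 hω fun ω => (g ω, f ω)
        have hg := pr_pos_of_pos hμ.1 hω g
        have hqω := hqpos _ _ hgf
        rw [log_div hgf.ne' (mul_pos hg hqω).ne', log_mul hg.ne' hqω.ne']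
        ring

lemma mi_le_sum_mul_log [Fintype α] [Fintype γ] (hμ : IsPMF μ) (f : Ω → α) (g : Ω → γ)
    {r : γ → ℝ} (hr : IsPMF r) (hrpos : ∀ c, 0 < pr μ g c → 0 < r c) :
    mi μ f g ≤ ∑ ω, μ ω *
      log (pr μ (fun ω => (g ω, f ω)) (g ω, f ω) / pr μ f (f ω) / r (g ω)) := by
  calc mi μ f g ≤ mi μ f g + KL (pr μ g) r :=
        le_add_of_nonneg_right (KL_nonneg (isPMF_pr hμ g) hr hrpos)
    _ = _ := by
        simp only [mi_eq_sum, KL_pr_eq_sum, ← Finset.sum_add_distrib, ← mul_add]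
        refine sum_mul_congr_of_pos hμ.1 fun ω hω => ?_
        have hgf := pr_pos_of_pos hμ.1 hω fun ω => (g ω, f ω)
        have hf := pr_pos_of_pos hμ.1 hω f
        have hg := pr_pos_of_pos hμ.1 hω g
        have hrg := hrpos _ hg
        rw [log_div (div_pos hgf hf).ne' hrg.ne', log_div hgf.ne' hf.ne', log_div hg.ne' hrg.ne',
          pr_pair_comm f g]
        ring

end Probability

theorem vib_lower_bound_general {Ω Xv Yv Zv : Type*}
    [Fintype Ω] [Fintype Xv] [Fintype Yv] [Fintype Zv]
    (μ : Ω → ℝ) (hμ : IsPMF μ)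
    (X : Ω → Xv) (Y : Ω → Yv) (Z : Ω → Zv)
    (hMarkov : ∀ x yv zv, 0 < pr μ X x →
      pr μ (fun ω => (Y ω, Z ω, X ω)) (yv, zv, x) / pr μ X x
        = (pr μ (fun ω => (Y ω, X ω)) (yv, x) / pr μ X x)
          * (pr μ (fun ω => (Z ω, X ω)) (zv, x) / pr μ X x))
    (β : ℝ) (hβ : 0 ≤ β)
    (q : Zv → Yv → ℝ) (hq : ∀ z, IsPMF (q z))
    (hqpos : ∀ z yv, 0 < pr μ (fun ω => (Z ω, Y ω)) (z, yv) → 0 < q z yv)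
    (r : Zv → ℝ) (hr : IsPMF r)
    (hrpos : ∀ z, 0 < pr μ Z z → 0 < r z) :
    ∑ x, ∑ yv, pr μ (fun ω => (X ω, Y ω)) (x, yv) *
      (∑ z, (pr μ (fun ω => (Z ω, X ω)) (z, x) / pr μ X x) *
        (Real.log (q z yv)
          - β * Real.log ((pr μ (fun ω => (Z ω, X ω)) (z, x) / pr μ X x) / r z)))
      ≤ mi μ Z Y - β * mi μ X Z := by
  calc _ = ∑ ω, μ ω * (log (q (Z ω) (Y ω)) - β *
          log (pr μ (fun ω => (Z ω, X ω)) (Z ω, X ω) / pr μ X (X ω) / r (Z ω))) := by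
        rw [← sum_pr_mul (fun ω => (Y ω, Z ω, X ω)) fun w => log (q w.2.1 w.1) - β *
          log (pr μ (fun ω => (Z ω, X ω)) w.2 / pr μ X w.2.2 / r w.2.1)]
        simp only [Fintype.sum_prod_type, Finset.mul_sum, ← mul_assoc,
          fun x y z => pr_pair_mul_div_eq_pr_triple hμ.1 (hMarkov x y z)]
        rw [Finset.sum_comm]
        simp only [Finset.sum_comm (γ := Xv)]
    _ = ∑ ω, μ ω * log (q (Z ω) (Y ω)) - β * ∑ ω, μ ω *
          log (pr μ (fun ω => (Z ω, X ω)) (Z ω, X ω) / pr μ X (X ω) / r (Z ω)) := by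
        simp only [mul_sub, Finset.sum_sub_distrib, mul_left_comm _ β, ← Finset.mul_sum]
    _ ≤ mi μ Z Y - β * mi μ X Z := by
        linarith [sum_mul_log_le_mi hμ Z Y hq hqpos,
          mul_le_mul_of_nonneg_left (mi_le_sum_mul_log hμ X Z hr hrpos) hβ]

/-- Variational information bottleneck bound: under the Markov chain `Y — X — Z`,
for any variational decoder `q(y|z)` and variational marginal `r(z)`, the IB
objective `I(Z; Y) - β·I(X; Z)` is lower bounded by the VIB objective. -/
theorem vib_lower_bound {Ω Xv Yv Zv : Type*}
    [Fintype Ω] [Nonempty Ω] [Fintype Xv] [Nonempty Xv] [Fintype Yv] [Nonempty Yv]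
    [Fintype Zv] [Nonempty Zv]
    (μ : Ω → ℝ) (hμ : IsPMF μ)
    (X : Ω → Xv) (Y : Ω → Yv) (Z : Ω → Zv)
    (hMarkov : ∀ x yv zv, 0 < pr μ X x →
      pr μ (fun ω => (Y ω, Z ω, X ω)) (yv, zv, x) / pr μ X x
        = (pr μ (fun ω => (Y ω, X ω)) (yv, x) / pr μ X x)
          * (pr μ (fun ω => (Z ω, X ω)) (zv, x) / pr μ X x))
    (β : ℝ) (hβ : 0 ≤ β)
    (q : Zv → Yv → ℝ) (hq : ∀ z, IsPMF (q z))
    (hqpos : ∀ z yv, 0 < pr μ (fun ω => (Z ω, Y ω)) (z, yv) → 0 < q z yv)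
    (r : Zv → ℝ) (hr : IsPMF r)
    (hrpos : ∀ z, 0 < pr μ Z z → 0 < r z) :
    ∑ x, ∑ yv, pr μ (fun ω => (X ω, Y ω)) (x, yv) *
      (∑ z, (pr μ (fun ω => (Z ω, X ω)) (z, x) / pr μ X x) *
        (Real.log (q z yv)
          - β * Real.log ((pr μ (fun ω => (Z ω, X ω)) (z, x) / pr μ X x) / r z)))
      ≤ mi μ Z Y - β * mi μ X Z :=
  vib_lower_bound_general μ hμ X Y Z hMarkov β hβ q hq hqpos r hr hrpos
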